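/- arXiv:1710.01774 — 5 statements merged into one kernel-verified Lean document; each statement's English description precedes it below -/
import Mathlib

section
/- For each nonempty subset X of Zar(F) and each ultrafilter 𝓕 on X, the set V_𝓕 = { x ∈ F : {W ∈ X : x ∈ W} ∈ 𝓕 } is a valuation ring of F (i.e., a subring of F such that for every nonzero t ∈ F, either t ∈ V_𝓕 or t⁻¹ ∈ V_𝓕). -/
open Set

/-- A subring `V` of a field `F` is a valuation ring of `F` (with quotient field `F`). -/
def IsValSubring (F : Type*) [Field F] (V : Subring F) : Prop :=
  ∀ t : F, t ≠ 0 → t ∈ V ∨ t⁻¹ ∈ V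

/-- The Zariski-Riemann space of the field `F`: the set of valuation rings of `F`. -/
def Zar (F : Type*) [Field F] : Type _ := {V : Subring F // IsValSubring F V}

/-- The patch (constructible) topology on `Zar F`, generated by the sets
`{V : x ∈ V}` and `{V : y ∉ V}` for `x, y ∈ F`. -/
instance Zar.patchTopology (F : Type*) [Field F] : TopologicalSpace (Zar F) :=
  TopologicalSpace.generateFrom
    ({S | ∃ x : F, S = {V : Zar F | x ∈ V.1}} ∪ {S | ∃ y : F, S = {V : Zar F | y ∉ V.1}})

variable {F : Type*} [Field F]

/-- The maximal ideal of a valuation ring of `F`, as a subset of `F`. -/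
def mIdeal (V : Zar F) : Set F := {x : F | x ∈ V.1 ∧ (x = 0 ∨ x⁻¹ ∉ V.1)}

/-- `A(X)`: the intersection of the valuation rings in `X`, as a subset of `F`. -/
def aSet (X : Set (Zar F)) : Set F := ⋂ V ∈ X, ((V : Zar F).1 : Set F)

/-- `A(X)` as a subring of `F`. -/
def ASub (X : Set (Zar F)) : Subring F := ⨅ V ∈ X, (V : Zar F).1

/-- `J(X)`: the intersection of the maximal ideals of the valuation rings in `X`. -/
def jSet (X : Set (Zar F)) : Set F := ⋂ V ∈ X, mIdeal V

/-- The set of limit points of `X` in the patch topology of `Zar F`. -/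
def limPts (X : Set (Zar F)) : Set (Zar F) :=
  {V : Zar F | ∀ U : Set (Zar F), IsOpen U → V ∈ U → ∃ W ∈ X, W ≠ V ∧ W ∈ U}


theorem stmt0 (X : Set (Zar F)) (hX : X.Nonempty) (𝓕 : Ultrafilter X) :
    ∃ V : Zar F, (V.1 : Set F) = {x : F | {W : X | x ∈ (W : Zar F).1} ∈ 𝓕} := by
  refine ⟨⟨{ carrier := {x : F | {W : X | x ∈ (W : Zar F).1} ∈ 𝓕}
             one_mem' := ?_
             mul_mem' := ?_
             zero_mem' := ?_
             add_mem' := ?_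
             neg_mem' := ?_ }, ?_⟩, rfl⟩
  · intro a b ha hb
    filter_upwards [ha, hb] with W h1 h2 using Subring.mul_mem _ h1 h2
  · have : {W : X | (1:F) ∈ (W : Zar F).1} = Set.univ := by
      ext W; simp [Subring.one_mem]
    show {W : X | (1:F) ∈ (W : Zar F).1} ∈ 𝓕
    rw [this]; exact Filter.univ_mem
  · intro a b ha hb
    filter_upwards [ha, hb] with W h1 h2 using Subring.add_mem _ h1 h2
  · have : {W : X | (0:F) ∈ (W : Zar F).1} = Set.univ := by
      ext W; simp [Subring.zero_mem]
    show {W : X | (0:F) ∈ (W : Zar F).1} ∈ 𝓕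
    rw [this]; exact Filter.univ_mem
  · intro a ha
    filter_upwards [ha] with W h using Subring.neg_mem _ h
  · intro t ht
    have hu : {W : X | t ∈ (W : Zar F).1} ∪ {W : X | t⁻¹ ∈ (W : Zar F).1} = Set.univ := by
      ext W; simpa using (W : Zar F).2 t ht
    have : {W : X | t ∈ (W : Zar F).1} ∪ {W : X | t⁻¹ ∈ (W : Zar F).1} ∈ 𝓕 := by
      rw [hu]; exact Filter.univ_mem
    exact Ultrafilter.union_mem_iff.1 this
end

section
/- Let X be an infinite subset of Zar(F). Then the union over all cofinite subsets Y of X of the rings A(Y) = ⋂_{V∈Y} V equals A(lim X) = ⋂_{U ∈ lim X} U, where lim X is the set of patch limit points of X in Zar(F). -/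
open Set

variable {F : Type*} [Field F]

/-!
An element `t` lies in `A(Y)` for some cofinite `Y ⊆ X` iff only finitely many `V ∈ X` omit `t`.
The set `{V | t ∉ V}` is clopen in the patch topology, which is compact and T1, so `X` meets it
in an infinite set iff it contains a limit point of `X`, i.e. iff `t ∉ A(lim X)`.
Compactness comes from ultrafilters: the limit of `𝒰` is the valuation ring of those `x` with
`x ∈ V` for `𝒰`-almost every `V`, which is a valuation ring because `𝒰` is prime.
-/

open Filter Topology

theorem AccPt.inter_of_mem_nhds {X : Type*} [TopologicalSpace X] {x : X} {s C : Set X}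
    (h : AccPt x (𝓟 s)) (hC : C ∈ 𝓝 x) : AccPt x (𝓟 (s ∩ C)) :=
  accPt_iff_frequently_nhdsNE.2 <|
    (accPt_iff_frequently_nhdsNE.1 h).and_eventually (mem_nhdsWithin_of_mem_nhds hC)

theorem finite_inter_iff_disjoint_derivedSet {X : Type*} [TopologicalSpace X] [CompactSpace X]
    [T1Space X] {s C : Set X} (hC : IsClopen C) :
    (s ∩ C).Finite ↔ Disjoint (derivedSet s) C := by
  refine ⟨fun hfin => disjoint_left.2 fun x hx hxC => ?_, fun hdisj => ?_⟩
  · exact Set.Infinite.of_accPt (hx.inter_of_mem_nhds (hC.isOpen.mem_nhds hxC)) hfin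
  · by_contra hinf
    obtain ⟨x, hx⟩ := Set.Infinite.exists_accPt_principal hinf
    have hxC : x ∈ C := hC.isClosed.closure_subset_iff.2 inter_subset_right
      (mem_closure_iff_clusterPt.2 hx.clusterPt)
    exact disjoint_left.1 hdisj (hx.mono (principal_mono.2 inter_subset_left)) hxC

theorem mem_iUnion_aSet_cofinite_iff {X : Set (Zar F)} {t : F} :
    t ∈ ⋃ Y ∈ {Y : Set (Zar F) | Y ⊆ X ∧ (X \ Y).Finite}, aSet Y ↔
      (X ∩ {V : Zar F | t ∉ V.1}).Finite := by
  simp only [mem_iUnion₂, mem_ofPred_eq, aSet, mem_iInter₂, SetLike.mem_coe]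
  constructor
  · rintro ⟨Y, ⟨-, hfin⟩, htY⟩
    exact hfin.subset fun V hV => ⟨hV.1, fun hVY => hV.2 (htY V hVY)⟩
  · intro hfin
    refine ⟨X \ {V | t ∉ V.1}, ⟨sdiff_subset, ?_⟩, fun V hV => not_not.1 hV.2⟩
    rwa [sdiff_sdiff_right_self]

namespace Zar

theorem isOpen_setOf_mem (x : F) : IsOpen {V : Zar F | x ∈ V.1} :=
  TopologicalSpace.isOpen_generateFrom_of_mem (Or.inl ⟨x, rfl⟩)

theorem isOpen_setOf_notMem (x : F) : IsOpen {V : Zar F | x ∉ V.1} :=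
  TopologicalSpace.isOpen_generateFrom_of_mem (Or.inr ⟨x, rfl⟩)

theorem isClopen_setOf_notMem (x : F) : IsClopen {V : Zar F | x ∉ V.1} :=
  ⟨by simpa only [compl_ofPred, not_not] using (isOpen_setOf_mem x).isClosed_compl,
    isOpen_setOf_notMem x⟩

def ultrafilterLim (𝒰 : Ultrafilter (Zar F)) : Zar F where
  val :=
    { carrier := {x | {V : Zar F | x ∈ V.1} ∈ 𝒰}
      zero_mem' := univ_mem' fun V => V.1.zero_mem
      one_mem' := univ_mem' fun V => V.1.one_mem
      add_mem' := fun hx hy => mem_of_superset (inter_mem hx hy)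
        fun V hV => V.1.add_mem hV.1 hV.2
      mul_mem' := fun hx hy => mem_of_superset (inter_mem hx hy)
        fun V hV => V.1.mul_mem hV.1 hV.2
      neg_mem' := fun hx => mem_of_superset hx fun V hV => V.1.neg_mem hV }
  property t ht := Ultrafilter.union_mem_iff.1 (univ_mem' fun V => V.2 t ht)

theorem le_nhds_ultrafilterLim (𝒰 : Ultrafilter (Zar F)) : ↑𝒰 ≤ 𝓝 (ultrafilterLim 𝒰) := by
  refine TopologicalSpace.tendsto_nhds_generateFrom_iff.2 ?_
  rintro s (⟨x, rfl⟩ | ⟨y, rfl⟩) hs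
  · exact hs
  · exact Ultrafilter.compl_mem_iff_notMem.2 hs

instance : CompactSpace (Zar F) :=
  ⟨isCompact_iff_ultrafilter_le_nhds.2 fun 𝒰 _ => ⟨_, mem_univ _, le_nhds_ultrafilterLim 𝒰⟩⟩

instance : T1Space (Zar F) := by
  refine t1Space_iff_exists_open.2 fun V W hVW => ?_
  obtain ⟨x, hx⟩ : ∃ x, ¬(x ∈ V.1 ↔ x ∈ W.1) := by
    by_contra! h
    exact hVW (Subtype.ext (SetLike.ext h))
  by_cases hxV : x ∈ V.1
  · exact ⟨_, isOpen_setOf_mem x, hxV, fun hxW => hx (iff_of_true hxV hxW)⟩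
  · exact ⟨_, isOpen_setOf_notMem x, hxV, fun hxW => hx (iff_of_false hxV hxW)⟩

end Zar

theorem limPts_eq_derivedSet (X : Set (Zar F)) : limPts X = derivedSet X := by
  ext V
  simp only [limPts, mem_ofPred_eq, mem_derivedSet, accPt_iff_nhds]
  constructor
  · intro h U hU
    obtain ⟨O, hOU, hO, hVO⟩ := mem_nhds_iff.1 hU
    obtain ⟨W, hWX, hWV, hWO⟩ := h O hO hVO
    exact ⟨W, ⟨hOU hWO, hWX⟩, hWV⟩
  · intro h U hU hVU
    obtain ⟨W, ⟨hWU, hWX⟩, hWV⟩ := h U (hU.mem_nhds hVU)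
    exact ⟨W, hWX, hWV, hWU⟩

theorem stmt1_general (X : Set (Zar F)) :
    (⋃ Y ∈ {Y : Set (Zar F) | Y ⊆ X ∧ (X \ Y).Finite}, aSet Y) = aSet (limPts X) := by
  ext t
  rw [mem_iUnion_aSet_cofinite_iff,
    finite_inter_iff_disjoint_derivedSet (Zar.isClopen_setOf_notMem t), ← limPts_eq_derivedSet]
  simp only [aSet, mem_iInter₂, SetLike.mem_coe, disjoint_left, mem_ofPred_eq, not_not]

theorem stmt1 (X : Set (Zar F)) (hX : X.Infinite) :
    (⋃ Y ∈ {Y : Set (Zar F) | Y ⊆ X ∧ (X \ Y).Finite}, aSet Y) = aSet (limPts X) :=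
  stmt1_general X
end

section
/- Let X be an infinite subset of Zar(F), let 𝓕 be a nonprincipal ultrafilter on an infinite subset Y of X, and let V = { x ∈ F : {U ∈ Y : x ∈ U} ∈ 𝓕 }. Then V is a patch limit point of Y (and hence of X). -/
open Set

variable {F : Type*} [Field F]

theorem stmt7 (X Y : Set (Zar F)) (hX : X.Infinite) (hYX : Y ⊆ X) (hY : Y.Infinite)
    (𝓕 : Ultrafilter Y) (hnp : ∀ s : Set Y, s ∈ 𝓕 → s.Infinite)
    (V : Zar F) (hV : (V.1 : Set F) = {x : F | {U : Y | x ∈ (U : Zar F).1} ∈ 𝓕}) :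
    V ∈ limPts Y ∧ V ∈ limPts X := by
  have key : ∀ U : Set (Zar F), IsOpen U → V ∈ U → {W : Y | (W : Zar F) ∈ U} ∈ 𝓕 := by
    intro U hU
    induction hU with
    | basic S hS =>
      intro hVS
      rcases hS with ⟨x, rfl⟩ | ⟨y, rfl⟩
      · have hx : x ∈ (V.1 : Set F) := hVS
        rw [hV] at hx
        exact hx
      · have hy : y ∉ (V.1 : Set F) := hVS
        rw [hV] at hy
        exact Ultrafilter.compl_mem_iff_notMem.mpr hy
    | univ => intro _; exact Filter.univ_mem
    | inter s t _ _ ihs iht =>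
      intro hV'
      exact Filter.inter_mem (ihs hV'.1) (iht hV'.2)
    | sUnion S hS ih =>
      intro hV'
      obtain ⟨t, htS, hVt⟩ := hV'
      exact Filter.mem_of_superset (ih t htS hVt) (fun W hW => ⟨t, htS, hW⟩)
  have hlimY : V ∈ limPts Y := by
    intro U hU hVU
    have hs := hnp _ (key U hU hVU)
    have h2 : ({W : Y | (W : Zar F) ∈ U} \ {W : Y | (W : Zar F) = V}).Nonempty := by
      apply Set.Infinite.nonempty
      apply hs.diff
      apply Set.Subsingleton.finite
      intro a ha b hb
      exact Subtype.ext (ha.trans hb.symm)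
    obtain ⟨W, hWU, hWV⟩ := h2
    exact ⟨W, W.2, fun h => hWV h, hWU⟩
  exact ⟨hlimY, fun U hU hVU => by
    obtain ⟨W, hWY, hWV, hWU⟩ := hlimY U hU hVU
    exact ⟨W, hYX hWY, hWV, hWU⟩⟩
end

section
/- Let {V_i : i ∈ I} and {W_i : i ∈ I} be families of pairwise distinct valuation rings in Zar(F) with V_i ⊆ W_i for all i. Then for each patch limit point V of {V_i : i ∈ I} there exists a patch limit point W of {W_i : i ∈ I} with V ⊆ W, and conversely for each patch limit point W of {W_i} there exists a patch limit point V of {V_i} with V ⊆ W. -/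
open Set

variable {F : Type*} [Field F]

section Aux

lemma isOpen_memSet (x : F) : IsOpen {V : Zar F | x ∈ V.1} :=
  TopologicalSpace.GenerateOpen.basic _ (Or.inl ⟨x, rfl⟩)

lemma isOpen_notMemSet (y : F) : IsOpen {V : Zar F | y ∉ V.1} :=
  TopologicalSpace.GenerateOpen.basic _ (Or.inr ⟨y, rfl⟩)

/-- T1-type separation in the patch topology. -/
lemma patch_sep {Z P : Zar F} (h : P ≠ Z) :
    ∃ U : Set (Zar F), IsOpen U ∧ Z ∈ U ∧ P ∉ U := by
  have hne : P.1 ≠ Z.1 := fun e => h (Subtype.ext e)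
  have : ∃ x : F, ¬(x ∈ P.1 ↔ x ∈ Z.1) := by
    by_contra hc
    push_neg at hc
    exact hne (SetLike.ext fun x => hc x)
  obtain ⟨x, hx⟩ := this
  by_cases hz : x ∈ Z.1
  · exact ⟨{V : Zar F | x ∈ V.1}, isOpen_memSet x, hz, fun hp => hx ⟨fun _ => hz, fun _ => hp⟩⟩
  · exact ⟨{V : Zar F | x ∉ V.1}, isOpen_notMemSet x, hz,
      fun hp => hx ⟨fun hxp => absurd hxp hp, fun hxz => absurd hxz hz⟩⟩

/-- From a patch limit point of the range of `f`, produce an ultrafilter on `I`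
capturing convergence, containing no subsingleton sets. -/
lemma exists_ultrafilter_of_limPt {I : Type*} {f : I → Zar F} {Z : Zar F}
    (hZ : Z ∈ limPts (Set.range f)) :
    ∃ 𝒰 : Ultrafilter I,
      (∀ U : Set (Zar F), IsOpen U → Z ∈ U → {i | f i ∈ U} ∈ 𝒰) ∧
      (∀ S ∈ 𝒰, ¬ S.Subsingleton) := by
  have hlim : ∀ U : Set (Zar F), IsOpen U → Z ∈ U → ∃ i, f i ≠ Z ∧ f i ∈ U := by
    intro U hU hZU
    obtain ⟨P, ⟨i, rfl⟩, hne, hPU⟩ := hZ U hU hZU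
    exact ⟨i, hne, hPU⟩
  set L : Filter I := Filter.comap f (nhdsWithin Z {Z}ᶜ) with hL
  have hbas := nhdsWithin_basis_open Z ({Z}ᶜ : Set (Zar F))
  have hne : L.NeBot := by
    rw [hL, Filter.comap_neBot_iff]
    intro t ht
    obtain ⟨U, ⟨hZU, hU⟩, hsub⟩ := hbas.mem_iff.mp ht
    obtain ⟨i, hfi, hfiU⟩ := hlim U hU hZU
    exact ⟨i, hsub ⟨hfiU, hfi⟩⟩
  refine ⟨@Ultrafilter.of I L hne, ?_, ?_⟩
  · intro U hU hZU
    have h1 : U ∩ {Z}ᶜ ∈ nhdsWithin Z ({Z}ᶜ : Set (Zar F)) :=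
      hbas.mem_of_mem ⟨hZU, hU⟩
    have h2 : f ⁻¹' (U ∩ {Z}ᶜ) ∈ L := Filter.preimage_mem_comap h1
    have h3 : f ⁻¹' (U ∩ {Z}ᶜ) ∈ (Ultrafilter.of L : Filter I) :=
      Ultrafilter.of_le L h2
    exact Filter.mem_of_superset h3 (fun i hi => hi.1)
  · intro S hS hsub
    -- every set of the ultrafilter meets each `f ⁻¹' (U ∩ {Z}ᶜ)`
    have hSne : S.Nonempty := Ultrafilter.nonempty_of_mem hS
    obtain ⟨i0, hi0⟩ := hSne
    have hall : ∀ U : Set (Zar F), IsOpen U → Z ∈ U → f i0 ∈ U ∧ f i0 ≠ Z := by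
      intro U hU hZU
      have h1 : U ∩ {Z}ᶜ ∈ nhdsWithin Z ({Z}ᶜ : Set (Zar F)) :=
        hbas.mem_of_mem ⟨hZU, hU⟩
      have h2 : f ⁻¹' (U ∩ {Z}ᶜ) ∈ (Ultrafilter.of L : Filter I) :=
        Ultrafilter.of_le L (Filter.preimage_mem_comap h1)
      have h3 : (S ∩ f ⁻¹' (U ∩ {Z}ᶜ)).Nonempty :=
        Ultrafilter.nonempty_of_mem (Filter.inter_mem hS h2)
      obtain ⟨j, hjS, hj⟩ := h3
      have : j = i0 := hsub hjS hi0
      subst this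
      exact ⟨hj.1, hj.2⟩
    have hne0 : f i0 ≠ Z := (hall Set.univ isOpen_univ (Set.mem_univ _)).2
    obtain ⟨U, hU, hZU, hPU⟩ := patch_sep hne0
    exact hPU (hall U hU hZU).1

/-- The ultralimit of a family of valuation rings along an ultrafilter. -/
def ulim {I : Type*} (𝒰 : Ultrafilter I) (g : I → Zar F) : Zar F :=
  ⟨{ carrier := {x : F | {i | x ∈ (g i).1} ∈ 𝒰}
     one_mem' := Filter.univ_mem' (fun i => (g i).1.one_mem)
     zero_mem' := Filter.univ_mem' (fun i => (g i).1.zero_mem)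
     mul_mem' := fun hx hy => Filter.mem_of_superset (Filter.inter_mem hx hy)
       (fun i hi => (g i).1.mul_mem hi.1 hi.2)
     add_mem' := fun hx hy => Filter.mem_of_superset (Filter.inter_mem hx hy)
       (fun i hi => (g i).1.add_mem hi.1 hi.2)
     neg_mem' := fun hx => Filter.mem_of_superset hx (fun i hi => (g i).1.neg_mem hi) },
   by
     intro t ht
     by_cases h : {i | t ∈ (g i).1} ∈ 𝒰
     · exact Or.inl h
     · refine Or.inr ?_
       have hc : {i | t ∈ (g i).1}ᶜ ∈ 𝒰 := (Ultrafilter.compl_mem_iff_notMem).mpr h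
       exact Filter.mem_of_superset hc (fun i hi => ((g i).2 t ht).resolve_left hi)⟩

lemma mem_ulim_iff {I : Type*} {𝒰 : Ultrafilter I} {g : I → Zar F} {x : F} :
    x ∈ (ulim 𝒰 g).1 ↔ {i | x ∈ (g i).1} ∈ 𝒰 := Iff.rfl

/-- Every open set containing the ultralimit contains `𝒰`-many members of the family. -/
lemma ulim_mem_open {I : Type*} (𝒰 : Ultrafilter I) (g : I → Zar F)
    {U : Set (Zar F)} (hU : IsOpen U) (hmem : ulim 𝒰 g ∈ U) : {i | g i ∈ U} ∈ 𝒰 := by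
  have hU' : TopologicalSpace.GenerateOpen
      ({S | ∃ x : F, S = {V : Zar F | x ∈ V.1}} ∪ {S | ∃ y : F, S = {V : Zar F | y ∉ V.1}}) U := hU
  induction hU' with
  | basic s hs =>
    rcases hs with ⟨x, rfl⟩ | ⟨y, rfl⟩
    · exact hmem
    · have hy : {i | y ∈ (g i).1} ∉ 𝒰 := hmem
      exact Filter.mem_of_superset ((Ultrafilter.compl_mem_iff_notMem).mpr hy)
        (fun i hi => hi)
  | univ => exact Filter.univ_mem
  | inter s t hs ht ihs iht =>
    exact Filter.mem_of_superset (Filter.inter_mem (ihs hs hmem.1) (iht ht hmem.2))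
      (fun i hi => ⟨hi.1, hi.2⟩)
  | sUnion S hS ih =>
    obtain ⟨s, hsS, hms⟩ := hmem
    exact Filter.mem_of_superset (ih s hsS (hS s hsS) hms) (fun i hi => ⟨s, hsS, hi⟩)

/-- If `𝒰` contains no subsingleton sets and `g` is injective, the ultralimit is a
patch limit point of the range of `g`. -/
lemma ulim_limPt {I : Type*} (𝒰 : Ultrafilter I) {g : I → Zar F}
    (hginj : Function.Injective g) (hns : ∀ S ∈ 𝒰, ¬ S.Subsingleton) :
    ulim 𝒰 g ∈ limPts (Set.range g) := by
  intro U hU hmem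
  have hS : {i | g i ∈ U} ∈ 𝒰 := ulim_mem_open 𝒰 g hU hmem
  by_contra hc
  push_neg at hc
  have hall : ∀ i, g i ∈ U → g i = ulim 𝒰 g := by
    intro i hi
    by_contra hne
    exact hc (g i) ⟨i, rfl⟩ hne hi
  refine hns _ hS ?_
  intro i hi j hj
  exact hginj ((hall i hi).trans (hall j hj).symm)

/-- If `𝒰` converges to `Z` along `g` (on open sets), then every `𝒰`-large membership
statement holds in `Z`. -/
lemma ulim_le_of_conv {I : Type*} {𝒰 : Ultrafilter I} {g : I → Zar F} {Z : Zar F}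
    (h : ∀ U : Set (Zar F), IsOpen U → Z ∈ U → {i | g i ∈ U} ∈ 𝒰)
    {x : F} (hx : {i | x ∈ (g i).1} ∈ 𝒰) : x ∈ Z.1 := by
  by_contra hxZ
  have h1 : {i | g i ∈ {V : Zar F | x ∉ V.1}} ∈ 𝒰 := h _ (isOpen_notMemSet x) hxZ
  have h2 : ({i | x ∈ (g i).1} ∩ {i | x ∉ (g i).1}).Nonempty :=
    Ultrafilter.nonempty_of_mem (Filter.inter_mem hx h1)
  obtain ⟨i, hi1, hi2⟩ := h2
  exact hi2 hi1

end Aux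

theorem stmt8 {I : Type*} (V W : I → Zar F)
    (hVinj : Function.Injective V) (hWinj : Function.Injective W)
    (hle : ∀ i : I, (V i).1 ≤ (W i).1) :
    (∀ V' ∈ limPts (Set.range V), ∃ W' ∈ limPts (Set.range W), V'.1 ≤ W'.1) ∧
    (∀ W' ∈ limPts (Set.range W), ∃ V' ∈ limPts (Set.range V), V'.1 ≤ W'.1) := by
  constructor
  · intro V' hV'
    obtain ⟨𝒰, hconv, hns⟩ := exists_ultrafilter_of_limPt hV'
    refine ⟨ulim 𝒰 W, ulim_limPt 𝒰 hWinj hns, ?_⟩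
    intro x hx
    have h1 : {i | V i ∈ {Vg : Zar F | x ∈ Vg.1}} ∈ 𝒰 := hconv _ (isOpen_memSet x) hx
    exact mem_ulim_iff.mpr (Filter.mem_of_superset h1 (fun i hi => hle i hi))
  · intro W' hW'
    obtain ⟨𝒰, hconv, hns⟩ := exists_ultrafilter_of_limPt hW'
    refine ⟨ulim 𝒰 V, ulim_limPt 𝒰 hVinj hns, ?_⟩
    intro x hx
    have hx' : {i | x ∈ (V i).1} ∈ 𝒰 := mem_ulim_iff.mp hx
    have hxW : {i | x ∈ (W i).1} ∈ 𝒰 :=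
      Filter.mem_of_superset hx' (fun i hi => hle i hi)
    exact ulim_le_of_conv hconv hxW
end

section
/- Let V₁,…,Vₙ be rank one valuation rings of the field F and let B be a Prüfer G-domain with quotient field F. Then V₁ ∩ ⋯ ∩ Vₙ ∩ B is a Prüfer G-domain with quotient field F. -/
open Set

variable {F : Type*} [Field F]

/-- A valuation ring of `F` has rank one iff it is a maximal proper valuation subring of `F`. -/
def RankOne (V : Zar F) : Prop :=
  V.1 ≠ ⊤ ∧ ∀ W : Zar F, V.1 ≤ W.1 → W.1 ≠ ⊤ → W.1 = V.1

/-- A subset `A` of `F` has quotient field `F` if every element of `F` is a quotient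
of elements of `A`. -/
def HasQFSet (A : Set F) : Prop := ∀ x : F, ∃ a ∈ A, ∃ b ∈ A, b ≠ 0 ∧ x = a / b

/-- The localization of the subring `A` of `F` at the ideal `M`, realized inside `F`. -/
def locSet (A : Subring F) (M : Ideal A) : Set F :=
  {x : F | ∃ a b : A, b ∉ M ∧ (b : F) ≠ 0 ∧ x = (a : F) / (b : F)}

/-- `A` is a Prüfer domain with quotient field `F`: `F` is the quotient field of `A` and
the localization of `A` at each maximal ideal is a valuation ring of `F`. -/
def IsPruferOf (A : Subring F) : Prop :=
  HasQFSet (A : Set F) ∧ ∀ M : Ideal A, M.IsMaximal →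
    ∀ t : F, t ≠ 0 → t ∈ locSet A M ∨ t⁻¹ ∈ locSet A M

/-- `A` is a G-domain: the intersection of its nonzero prime ideals is nonzero. -/
def IsGDomainOf (A : Subring F) : Prop :=
  ∃ x : A, x ≠ 0 ∧ ∀ P : Ideal A, P.IsPrime → P ≠ ⊥ → x ∈ P

/-- `A` is a Prüfer G-domain with quotient field `F`. -/
def IsPruferG (A : Subring F) : Prop := IsPruferOf A ∧ IsGDomainOf A

/-!
Fix a rank one valuation ring `V` and a Prüfer G-domain `B`; by induction it suffices to treat
`D = V ∩ B`. If `B ⊆ V` there is nothing to do. Otherwise, starting from a G-element of `B` one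
finds `x ∈ B` of positive `V`-value with `B[1/x] = F` and `1 + xB ⊆ Bˣ`. Since `V` is archimedean,
also `V[1/x] = F`, hence `D[1/x] = F`, which makes `D` a G-domain with quotient field `F`. For the
Prüfer property, the key point is that `B = D + xᴸB` for every `L`: an element `β ∈ B \ V` is
congruent modulo `xB` to `β (1 + x β^(m+1))⁻¹`, which lies in `V` once `x β^m ∉ V`. Approximating
`c / τ` from a splitting `1 = b + c` in `B` modulo a high power of `x` then gives a splitting in `D`.
-/

namespace Zar

variable {V : Zar F} {t : F}

theorem ne_zero_of_notMem (h : t ∉ V.1) : t ≠ 0 :=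
  (ne_of_mem_of_not_mem V.1.zero_mem h).symm

theorem inv_mem_of_notMem (h : t ∉ V.1) : t⁻¹ ∈ V.1 :=
  (V.2 t (ne_zero_of_notMem h)).resolve_left h

theorem mem_of_inv_notMem (h : t⁻¹ ∉ V.1) : t ∈ V.1 := by
  simpa using inv_mem_of_notMem h

theorem ne_zero_of_inv_notMem (h : t⁻¹ ∉ V.1) : t ≠ 0 := by
  rintro rfl
  exact h (by simp)

/-- The valuation ring `V[1/u]`, for `u ∈ V`. -/
def away (V : Zar F) {u : F} (hu : u ∈ V.1) : Zar F where
  val :=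
    { carrier := {s | ∃ N : ℕ, s * u ^ N ∈ V.1}
      one_mem' := ⟨0, by simp⟩
      zero_mem' := ⟨0, by simp⟩
      mul_mem' := by
        rintro a b ⟨m, hm⟩ ⟨k, hk⟩
        exact ⟨m + k, by simpa [pow_add, mul_mul_mul_comm] using V.1.mul_mem hm hk⟩
      add_mem' := by
        rintro a b ⟨m, hm⟩ ⟨k, hk⟩
        refine ⟨m + k, ?_⟩
        have h : (a + b) * u ^ (m + k) = a * u ^ m * u ^ k + b * u ^ k * u ^ m := by ring
        rw [h]
        exact V.1.add_mem (V.1.mul_mem hm (pow_mem hu k)) (V.1.mul_mem hk (pow_mem hu m))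
      neg_mem' := by
        rintro a ⟨m, hm⟩
        exact ⟨m, by simpa [neg_mul] using V.1.neg_mem hm⟩ }
  property s hs := (V.2 s hs).imp (fun h => ⟨0, by simpa using h⟩) (fun h => ⟨0, by simpa using h⟩)

theorem le_away {u : F} (hu : u ∈ V.1) : V.1 ≤ (V.away hu).1 :=
  fun s hs => ⟨0, by simpa using hs⟩

theorem inv_mem_away {u : F} (hu : u ∈ V.1) : u⁻¹ ∈ (V.away hu).1 := by
  refine ⟨1, ?_⟩
  rcases eq_or_ne u 0 with rfl | hu0 <;> simp [*]

end Zar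

open Zar

/-- `A[1/x] = F`. -/
def AwayEqTop (A : Subring F) (x : F) : Prop := ∀ t : F, ∃ N : ℕ, t * x ^ N ∈ A

section AwayEqTop

variable {A A' : Subring F} {x y : F}

theorem AwayEqTop.mul (h : AwayEqTop A x) (hy : y ∈ A) : AwayEqTop A (x * y) := fun t => by
  obtain ⟨N, hN⟩ := h t
  exact ⟨N, by simpa [mul_pow, mul_assoc] using A.mul_mem hN (pow_mem hy N)⟩

theorem AwayEqTop.inf (h : AwayEqTop A x) (h' : AwayEqTop A' x) (hx : x ∈ A ⊓ A') :
    AwayEqTop (A ⊓ A') x := fun t => by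
  obtain ⟨N, hN⟩ := h t
  obtain ⟨N', hN'⟩ := h' t
  refine ⟨N + N', ⟨?_, ?_⟩⟩
  · simpa [pow_add, mul_assoc] using A.mul_mem hN (pow_mem hx.1 N')
  · rw [add_comm]
    simpa [pow_add, mul_assoc] using A'.mul_mem hN' (pow_mem hx.2 N)

theorem AwayEqTop.hasQFSet (h : AwayEqTop A x) (hxA : x ∈ A) (hx0 : x ≠ 0) :
    HasQFSet (A : Set F) := fun t => by
  obtain ⟨N, hN⟩ := h t
  exact ⟨t * x ^ N, hN, x ^ N, pow_mem hxA N, pow_ne_zero N hx0, by field_simp⟩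

theorem AwayEqTop.isGDomainOf (h : AwayEqTop A x) (hxA : x ∈ A) (hx0 : x ≠ 0) :
    IsGDomainOf A := by
  refine ⟨⟨x, hxA⟩, fun h0 => hx0 (congrArg Subtype.val h0), fun P hP hP0 => ?_⟩
  obtain ⟨ρ, hρP, hρ0⟩ := Submodule.exists_mem_ne_zero_of_ne_bot hP0
  have hρ0' : (ρ : F) ≠ 0 := fun h0 => hρ0 (Subtype.ext h0)
  obtain ⟨N, hN⟩ := h (ρ : F)⁻¹
  have hpow : (⟨x, hxA⟩ : A) ^ N = ρ * ⟨(ρ : F)⁻¹ * x ^ N, hN⟩ :=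
    Subtype.ext (by simp [hρ0'])
  exact hP.mem_of_pow_mem N (hpow ▸ P.mul_mem_right _ hρP)

end AwayEqTop

section GElement

variable {A : Subring F} {x : A}

theorem awayEqTop_of_forall_mem_prime (hA : HasQFSet (A : Set F))
    (hx : ∀ P : Ideal A, P.IsPrime → P ≠ ⊥ → x ∈ P) : AwayEqTop A x := by
  intro t
  obtain ⟨a, ha, b, hb, hb0, rfl⟩ := hA t
  have hrad : x ∈ (Ideal.span {(⟨b, hb⟩ : A)}).radical := by
    rw [Ideal.radical_eq_sInf, Ideal.mem_sInf]
    rintro P ⟨hbP, hP⟩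
    refine hx P hP fun hP0 => hb0 ?_
    simpa [hP0] using hbP (Ideal.mem_span_singleton_self _)
  obtain ⟨N, hN⟩ := hrad
  obtain ⟨c, hc⟩ := Ideal.mem_span_singleton'.mp hN
  have hc' : (c : F) * b = (x : F) ^ N := by simpa using congrArg Subtype.val hc
  refine ⟨N, ?_⟩
  rw [← hc', div_mul_eq_mul_div, mul_div_assoc, mul_div_cancel_right₀ _ hb0]
  exact A.mul_mem ha c.2

theorem inv_one_add_mul_mem_of_forall_mem_prime
    (hx : ∀ P : Ideal A, P.IsPrime → P ≠ ⊥ → x ∈ P) {ζ : F} (hζ : ζ ∈ A) :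
    (1 + x * ζ)⁻¹ ∈ A := by
  set u : A := 1 + x * ⟨ζ, hζ⟩
  have hu : (u : F) = 1 + x * ζ := by simp [u]
  rw [← hu]
  by_cases hu0 : u = 0
  · simp [hu0]
  have hunit : IsUnit u := by
    by_contra hnu
    obtain ⟨M, hM, huM⟩ := exists_max_ideal_of_mem_nonunits hnu
    have hxM : x ∈ M := hx M hM.isPrime fun hM0 => hu0 (by simpa [hM0] using huM)
    refine hM.ne_top ((Ideal.eq_top_iff_one _).mpr ?_)
    simpa [u] using M.sub_mem huM (M.mul_mem_right ⟨ζ, hζ⟩ hxM)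
  obtain ⟨w, hw⟩ := hunit.exists_right_inv
  rw [← eq_inv_of_mul_eq_one_right (by simpa using congrArg Subtype.val hw)]
  exact w.2

end GElement

section RankOne

variable {V : Zar F} {u : F}

theorem RankOne.awayEqTop (hV : RankOne V) (hu : u⁻¹ ∉ V.1) : AwayEqTop V.1 u := by
  intro t
  have huV := mem_of_inv_notMem hu
  by_cases htop : (V.away huV).1 = ⊤
  · exact (htop ▸ Subring.mem_top t : t ∈ (V.away huV).1)
  · refine absurd ?_ hu
    rw [← hV.2 _ (le_away huV) htop]
    exact inv_mem_away huV

theorem RankOne.exists_mul_pow_notMem (hV : RankOne V) {d x : F} (hd : d ∉ V.1) (hx : x ≠ 0) :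
    ∃ m : ℕ, x * d ^ m ∉ V.1 := by
  obtain ⟨N, hN⟩ := hV.awayEqTop (u := d⁻¹) (by rwa [inv_inv]) x⁻¹
  refine ⟨N + 1, fun h => hd ?_⟩
  have hd0 := ne_zero_of_notMem hd
  have : d = x⁻¹ * d⁻¹ ^ N * (x * d ^ (N + 1)) := by
    rw [inv_pow, pow_succ]; field_simp
  rw [this]
  exact V.1.mul_mem hN h

end RankOne

def colonIdeal (A : Subring F) (τ : F) : Ideal A where
  carrier := {b | (b : F) * τ ∈ A}
  add_mem' {a b} ha hb := by simpa [add_mul] using A.add_mem ha hb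
  zero_mem' := by simp
  smul_mem' c b hb := by simpa [mul_assoc] using A.mul_mem c.2 hb

/-- `1 = b + c` with `b τ, c τ⁻¹ ∈ A`: the element-wise form of `(A :_A τ) + (A :_A τ⁻¹) = A`,
which characterizes the Prüfer condition at `τ`. -/
def OneSplits (A : Subring F) (τ : F) : Prop :=
  ∃ b ∈ A, ∃ c ∈ A, b + c = 1 ∧ b * τ ∈ A ∧ c * τ⁻¹ ∈ A

section Prufer

variable {A : Subring F} {τ : F}

theorem OneSplits.inv (h : OneSplits A τ) : OneSplits A τ⁻¹ := by
  obtain ⟨b, hb, c, hc, hbc, hbτ, hcτ⟩ := h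
  exact ⟨c, hc, b, hb, by rw [add_comm, hbc], hcτ, by rwa [inv_inv]⟩

theorem IsPruferOf.oneSplits (hA : IsPruferOf A) (hτ : τ ≠ 0) : OneSplits A τ := by
  have hsup : colonIdeal A τ ⊔ colonIdeal A τ⁻¹ = ⊤ := by
    by_contra hne
    obtain ⟨M, hM, hle⟩ := Ideal.exists_le_maximal _ hne
    rcases hA.2 M hM τ hτ with ⟨a, b, hbM, hb0, hab⟩ | ⟨a, b, hbM, hb0, hab⟩
    · refine hbM (hle (Ideal.mem_sup_left ?_))
      show (b : F) * τ ∈ A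
      exact hab ▸ (mul_div_cancel₀ _ hb0).symm ▸ a.2
    · refine hbM (hle (Ideal.mem_sup_right ?_))
      show (b : F) * τ⁻¹ ∈ A
      exact hab ▸ (mul_div_cancel₀ _ hb0).symm ▸ a.2
  obtain ⟨b, hb, c, hc, hbc⟩ := Submodule.mem_sup.mp (hsup ▸ Submodule.mem_top : (1 : A) ∈ _)
  exact ⟨b, b.2, c, c.2, by simpa using congrArg Subtype.val hbc, hb, hc⟩

theorem mem_locSet_of_mul_mem {M : Ideal A} {b : F} (hb : b ∈ A) (hbM : ⟨b, hb⟩ ∉ M)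
    (hbτ : b * τ ∈ A) : τ ∈ locSet A M := by
  have hb0 : b ≠ 0 := by
    rintro rfl
    exact hbM M.zero_mem
  exact ⟨⟨b * τ, hbτ⟩, ⟨b, hb⟩, hbM, hb0, by field_simp⟩

theorem isPruferOf_of_oneSplits (hA : HasQFSet (A : Set F))
    (h : ∀ τ : F, τ ≠ 0 → OneSplits A τ) : IsPruferOf A := by
  refine ⟨hA, fun M hM τ hτ => ?_⟩
  obtain ⟨b, hb, c, hc, hbc, hbτ, hcτ⟩ := h τ hτ
  by_cases hbM : (⟨b, hb⟩ : A) ∈ M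
  · refine Or.inr (mem_locSet_of_mul_mem hc (fun hcM => hM.ne_top ?_) hcτ)
    have hsum : (⟨b, hb⟩ : A) + ⟨c, hc⟩ = 1 := Subtype.ext hbc
    exact (Ideal.eq_top_iff_one _).mpr (hsum ▸ M.add_mem hbM hcM)
  · exact Or.inl (mem_locSet_of_mul_mem hb hbM hbτ)

end Prufer

section RankOneInf

variable {V : Zar F} {B : Subring F} {x : F}

theorem exists_sub_mul_mem_of_rankOne (hV : RankOne V) (hxV : x⁻¹ ∉ V.1)
    (hxJ : ∀ ζ ∈ B, (1 + x * ζ)⁻¹ ∈ B) {β : F} (hβ : β ∈ B) :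
    ∃ δ ∈ B, β - x * δ ∈ V.1 := by
  by_cases hβV : β ∈ V.1
  · exact ⟨0, B.zero_mem, by simpa using hβV⟩
  have hβ0 := ne_zero_of_notMem hβV
  obtain ⟨m, hm⟩ := hV.exists_mul_pow_notMem hβV (ne_zero_of_inv_notMem hxV)
  have hγ : β⁻¹ + x * β ^ m ∉ V.1 :=
    (add_mem_cancel_left (inv_mem_of_notMem hβV)).not.mpr hm
  have hγ' : β⁻¹ + x * β ^ m = β⁻¹ * (1 + x * β ^ (m + 1)) := by
    field_simp
    ring
  have hu0 : 1 + x * β ^ (m + 1) ≠ 0 := by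
    intro h
    exact hγ (by simp [hγ', h])
  refine ⟨β ^ (m + 2) * (1 + x * β ^ (m + 1))⁻¹,
    B.mul_mem (pow_mem hβ _) (hxJ _ (pow_mem hβ _)), ?_⟩
  have heq : β - x * (β ^ (m + 2) * (1 + x * β ^ (m + 1))⁻¹) = (β⁻¹ + x * β ^ m)⁻¹ := by
    rw [hγ']
    field_simp
    ring
  rw [heq]
  exact inv_mem_of_notMem hγ

theorem exists_eq_add_pow_mul_of_rankOne (hV : RankOne V) (hxV : x⁻¹ ∉ V.1) (hxB : x ∈ B)
    (hxJ : ∀ ζ ∈ B, (1 + x * ζ)⁻¹ ∈ B) (L : ℕ) {β : F} (hβ : β ∈ B) :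
    ∃ η ∈ V.1 ⊓ B, ∃ δ ∈ B, β = η + x ^ L * δ := by
  induction L with
  | zero => exact ⟨0, zero_mem _, β, hβ, by simp⟩
  | succ L ih =>
    obtain ⟨η, hη, δ, hδ, rfl⟩ := ih
    obtain ⟨δ', hδ', hδV⟩ := exists_sub_mul_mem_of_rankOne hV hxV hxJ hδ
    have hxD : x ∈ V.1 ⊓ B := ⟨mem_of_inv_notMem hxV, hxB⟩
    refine ⟨η + x ^ L * (δ - x * δ'), ?_, δ', hδ', by ring⟩
    exact add_mem hη (mul_mem (pow_mem hxD L) ⟨hδV, B.sub_mem hδ (B.mul_mem hxB hδ')⟩)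

theorem oneSplits_inf_of_rankOne (hV : RankOne V) (hxV : x⁻¹ ∉ V.1) (hxB : x ∈ B)
    (hxQ : AwayEqTop B x) (hxJ : ∀ ζ ∈ B, (1 + x * ζ)⁻¹ ∈ B) (hB : IsPruferOf B) {τ : F}
    (hτ0 : τ ≠ 0) (hτV : τ ∈ V.1) : OneSplits (V.1 ⊓ B) τ := by
  obtain ⟨N, hN⟩ := hxQ τ
  obtain ⟨b₀, -, c₀, hc₀, hbc, hb₀τ, hc₀τ⟩ := hB.oneSplits hτ0
  obtain ⟨η, hη, r, hr, hc₀η⟩ :=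
    exists_eq_add_pow_mul_of_rankOne hV hxV hxB hxJ (2 * N) hc₀τ
  have hητ : η * τ = c₀ - τ * x ^ N * (x ^ N * r) := by
    linear_combination (-τ) * hc₀η + c₀ * mul_inv_cancel₀ hτ0
  have hc : η * τ ∈ V.1 ⊓ B :=
    ⟨V.1.mul_mem hη.1 hτV, hητ ▸ B.sub_mem hc₀ (B.mul_mem hN (B.mul_mem (pow_mem hxB N) hr))⟩
  have hbτ : (1 - η * τ) * τ = b₀ * τ + τ * x ^ N * (τ * x ^ N * r) := by
    rw [hητ, ← hbc]
    ring
  refine ⟨1 - η * τ, sub_mem (one_mem _) hc, η * τ, hc, sub_add_cancel _ _, ⟨?_, ?_⟩, ?_⟩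
  · exact V.1.mul_mem (V.1.sub_mem V.1.one_mem hc.1) hτV
  · rw [hbτ]
    exact B.add_mem hb₀τ (B.mul_mem hN (B.mul_mem hN hr))
  · rwa [mul_inv_cancel_right₀ hτ0]

theorem isPruferG_inf_of_awayEqTop (hV : RankOne V) (hxV : x⁻¹ ∉ V.1) (hxB : x ∈ B)
    (hxQ : AwayEqTop B x) (hxJ : ∀ ζ ∈ B, (1 + x * ζ)⁻¹ ∈ B) (hB : IsPruferOf B) :
    IsPruferG (V.1 ⊓ B) := by
  have hx0 := ne_zero_of_inv_notMem hxV
  have hxD : x ∈ V.1 ⊓ B := ⟨mem_of_inv_notMem hxV, hxB⟩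
  have hD : AwayEqTop (V.1 ⊓ B) x := (hV.awayEqTop hxV).inf hxQ hxD
  refine ⟨isPruferOf_of_oneSplits (hD.hasQFSet hxD hx0) fun τ hτ => ?_, hD.isGDomainOf hxD hx0⟩
  by_cases hτV : τ ∈ V.1
  · exact oneSplits_inf_of_rankOne hV hxV hxB hxQ hxJ hB hτ hτV
  · simpa using (oneSplits_inf_of_rankOne hV hxV hxB hxQ hxJ hB (inv_ne_zero hτ)
      (inv_mem_of_notMem hτV)).inv

theorem IsPruferG.inf_of_rankOne (hV : RankOne V) (hB : IsPruferG B) :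
    IsPruferG (V.1 ⊓ B) := by
  by_cases hBV : B ≤ V.1
  · rwa [inf_eq_right.mpr hBV]
  obtain ⟨d, hdB, hdV⟩ := SetLike.not_le_iff_exists.mp hBV
  obtain ⟨hPB, x₀, hx₀0, hx₀P⟩ := hB
  have hQ := awayEqTop_of_forall_mem_prime hPB.1 hx₀P
  have hJ : ∀ ζ ∈ B, (1 + x₀ * ζ)⁻¹ ∈ B := fun _ =>
    inv_one_add_mul_mem_of_forall_mem_prime hx₀P
  obtain ⟨x, hxB, hxV, hxQ, hxJ⟩ :
      ∃ x ∈ B, x⁻¹ ∉ V.1 ∧ AwayEqTop B x ∧ ∀ ζ ∈ B, (1 + x * ζ)⁻¹ ∈ B := by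
    by_cases hx₀V : (x₀ : F)⁻¹ ∈ V.1
    · -- `(x₀ (1 + x₀ d)⁻¹)⁻¹ = x₀⁻¹ + d ∉ V`.
      have hρ := hJ d hdB
      refine ⟨x₀ * (1 + x₀ * d)⁻¹, B.mul_mem x₀.2 hρ, ?_, hQ.mul hρ, fun ζ hζ => ?_⟩
      · have hx₀0' : (x₀ : F) ≠ 0 := fun h => hx₀0 (Subtype.ext h)
        rw [mul_inv, inv_inv, mul_add, inv_mul_cancel_left₀ hx₀0', mul_one]
        exact (add_mem_cancel_left hx₀V).not.mpr hdV
      · simpa [mul_assoc] using hJ _ (B.mul_mem hρ hζ)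
    · exact ⟨x₀, x₀.2, hx₀V, hQ, hJ⟩
  exact isPruferG_inf_of_awayEqTop hV hxV hxB hxQ hxJ hPB

end RankOneInf

theorem isPruferG_iInf_inf {ι : Type*} (V : ι → Zar F) (hV : ∀ i, RankOne (V i)) (s : Finset ι)
    {B : Subring F} (hB : IsPruferG B) : IsPruferG ((⨅ i ∈ s, (V i).1) ⊓ B) := by
  classical
  induction s using Finset.induction_on with
  | empty => simpa using hB
  | insert i s _ ih =>
    rw [Finset.iInf_insert, inf_assoc]
    exact ih.inf_of_rankOne (hV i)

theorem stmt16 (n : ℕ) (V : Fin n → Zar F) (h1 : ∀ i, RankOne (V i))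
    (B : Subring F) (hB : IsPruferG B) :
    IsPruferG ((⨅ i, (V i).1) ⊓ B) := by
  simpa using isPruferG_iInf_inf V h1 Finset.univ hB
end
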